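/- Let a > 0 and b ∈ ℝ, and define l(n) = logit(1 − Φ(a·√n + b)) for n > 0. Then lim_{n→∞} l(n)/n = −a²/2. -/

import Mathlib

open Filter MeasureTheory Set

/-- Standard normal CDF. -/
noncomputable def Phi (x : ℝ) : ℝ :=
  ∫ t in Set.Iio x, (Real.sqrt (2 * Real.pi))⁻¹ * Real.exp (-t ^ 2 / 2)

/-- Standard normal density. -/
noncomputable def stdPdf (x : ℝ) : ℝ := (Real.sqrt (2 * Real.pi))⁻¹ * Real.exp (-x ^ 2 / 2)

/-- Standard normal quantile function. -/
noncomputable def PhiInv : ℝ → ℝ := Function.invFun Phi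

/-- Logit function. -/
noncomputable def logit (x : ℝ) : ℝ := Real.log x - Real.log (1 - x)

/-!
For `x ≥ 1` the Gaussian tail `1 - Φ x = ∫_x^∞ φ` lies between `φ (x + 1)` (the integral over
`(x, x + 1]`) and `φ x` (comparing `φ t` with `φ x * exp (x - t)`), so
`log (1 - Φ x) = -x ^ 2 / 2 + O(x)`. With `x = a √n + b` we have `x ^ 2 / n → a ^ 2`, while
`log Φ x → 0`, so `logit (1 - Φ x) = log (1 - Φ x) - log Φ x` is `-a ^ 2 n / 2 + o(n)`.
-/

open Real ProbabilityTheory Topology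

lemma stdPdf_eq_gaussianPDFReal : stdPdf = gaussianPDFReal 0 1 := by
  funext x; simp [stdPdf, gaussianPDFReal]

lemma stdPdf_pos (x : ℝ) : 0 < stdPdf x := by
  rw [stdPdf_eq_gaussianPDFReal]; exact gaussianPDFReal_pos _ _ _ one_ne_zero

lemma integrable_stdPdf : Integrable stdPdf := by
  rw [stdPdf_eq_gaussianPDFReal]; exact integrable_gaussianPDFReal _ _

lemma one_sub_Phi_eq_integral_Ioi (x : ℝ) : 1 - Phi x = ∫ t in Ioi x, stdPdf t := by
  have htotal : ∫ t, stdPdf t = 1 := by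
    rw [stdPdf_eq_gaussianPDFReal]; exact integral_gaussianPDFReal_eq_one _ one_ne_zero
  rw [← htotal, ← intervalIntegral.integral_Iio_add_Ici (b := x) integrable_stdPdf.integrableOn
    integrable_stdPdf.integrableOn, integral_Ici_eq_integral_Ioi, Phi]
  exact add_sub_cancel_left _ _

lemma log_stdPdf (x : ℝ) : log (stdPdf x) = log (√(2 * π))⁻¹ - x ^ 2 / 2 := by
  rw [stdPdf, log_mul (by positivity) (exp_pos _).ne', log_exp, neg_div, sub_eq_add_neg]

lemma stdPdf_add_one_le_one_sub_Phi {x : ℝ} (hx : 0 ≤ x) : stdPdf (x + 1) ≤ 1 - Phi x := by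
  calc stdPdf (x + 1) = ∫ _ in Ioc x (x + 1), stdPdf (x + 1) := by simp
    _ ≤ ∫ t in Ioc x (x + 1), stdPdf t := by
      refine setIntegral_mono_on (by simp) integrable_stdPdf.integrableOn measurableSet_Ioc
        fun t ht => ?_
      unfold stdPdf
      gcongr
      exacts [hx.trans ht.1.le, ht.2]
    _ ≤ ∫ t in Ioi x, stdPdf t :=
      setIntegral_mono_set integrable_stdPdf.integrableOn
        (.of_forall fun t => (stdPdf_pos t).le) Ioc_subset_Ioi_self.eventuallyLE
    _ = 1 - Phi x := (one_sub_Phi_eq_integral_Ioi x).symm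

lemma one_sub_Phi_le_stdPdf {x : ℝ} (hx : 1 ≤ x) : 1 - Phi x ≤ stdPdf x := by
  calc 1 - Phi x = ∫ t in Ioi x, stdPdf t := one_sub_Phi_eq_integral_Ioi x
    _ ≤ ∫ t in Ioi x, stdPdf x * exp x * exp (-t) := by
      refine setIntegral_mono_on integrable_stdPdf.integrableOn
        ((integrableOn_exp_neg_Ioi x).const_mul _) measurableSet_Ioi fun t ht => ?_
      -- `t ^ 2 - x ^ 2 = (t - x) * (t + x) ≥ 2 * (t - x)` since `t + x ≥ 2`
      rw [stdPdf, stdPdf, mul_assoc, mul_assoc, ← exp_add, ← exp_add]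
      gcongr
      nlinarith [ht.out]
    _ = stdPdf x := by
      rw [integral_const_mul, integral_exp_neg_Ioi, mul_assoc, ← exp_add, add_neg_cancel,
        exp_zero, mul_one]

lemma tendsto_log_stdPdf_add_div_sq (d : ℝ) :
    Tendsto (fun x => log (stdPdf (x + d)) / x ^ 2) atTop (𝓝 (-1 / 2)) := by
  have hlim : Tendsto (fun y : ℝ => log (√(2 * π))⁻¹ * y ^ 2 - (1 + d * y) ^ 2 / 2) (𝓝 0)
      (𝓝 (-1 / 2)) := by
    convert (by fun_prop : Continuous fun y : ℝ =>
      log (√(2 * π))⁻¹ * y ^ 2 - (1 + d * y) ^ 2 / 2).tendsto 0 using 2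
    norm_num
  refine (hlim.comp tendsto_inv_atTop_zero).congr' ?_
  filter_upwards [eventually_ne_atTop 0] with x hx
  simp only [Function.comp, log_stdPdf]
  field_simp

lemma tendsto_log_one_sub_Phi_div_sq :
    Tendsto (fun x => log (1 - Phi x) / x ^ 2) atTop (𝓝 (-1 / 2)) := by
  refine tendsto_of_tendsto_of_tendsto_of_le_of_le' (tendsto_log_stdPdf_add_div_sq 1)
    (by simpa using tendsto_log_stdPdf_add_div_sq 0) ?_ ?_
  · filter_upwards [eventually_ge_atTop 0] with x hx
    gcongr
    exacts [stdPdf_pos _, stdPdf_add_one_le_one_sub_Phi hx]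
  · filter_upwards [eventually_ge_atTop 1] with x hx
    gcongr
    exacts [(stdPdf_pos _).trans_le (stdPdf_add_one_le_one_sub_Phi (zero_le_one.trans hx)),
      one_sub_Phi_le_stdPdf hx]

lemma tendsto_stdPdf_atTop : Tendsto stdPdf atTop (𝓝 0) := by
  have hexponent : Tendsto (fun x : ℝ => -x ^ 2 / 2) atTop atBot := by
    simpa only [neg_div, Function.comp_def] using tendsto_neg_atTop_atBot.comp
      ((tendsto_pow_atTop two_ne_zero).atTop_div_const (two_pos : (0 : ℝ) < 2))
  have h := (tendsto_exp_atBot.comp hexponent).const_mul (√(2 * π))⁻¹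
  rw [mul_zero] at h
  exact h

lemma tendsto_Phi_atTop : Tendsto Phi atTop (𝓝 1) := by
  have htail : Tendsto (fun x => 1 - Phi x) atTop (𝓝 0) := by
    refine tendsto_of_tendsto_of_tendsto_of_le_of_le' tendsto_const_nhds tendsto_stdPdf_atTop
      ?_ ?_ <;> filter_upwards [eventually_ge_atTop 1] with x hx
    · exact (stdPdf_pos _).le.trans (stdPdf_add_one_le_one_sub_Phi (zero_le_one.trans hx))
    · exact one_sub_Phi_le_stdPdf hx
  simpa using htail.const_sub 1

lemma tendsto_mul_sqrt_add_sq_div_self (a b : ℝ) :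
    Tendsto (fun n => (a * √n + b) ^ 2 / n) atTop (𝓝 (a ^ 2)) := by
  have hlim : Tendsto (fun y : ℝ => (a + b * y) ^ 2) (𝓝 0) (𝓝 (a ^ 2)) := by
    simpa using (by fun_prop : Continuous fun y : ℝ => (a + b * y) ^ 2).tendsto 0
  refine (hlim.comp (tendsto_inv_atTop_zero.comp tendsto_sqrt_atTop)).congr' ?_
  filter_upwards [eventually_gt_atTop 0] with n hn
  simp only [Function.comp]
  field_simp
  rw [sq_sqrt hn.le]
  ring

theorem stmt11 (a b : ℝ) (ha : 0 < a) :
    Filter.Tendsto (fun n : ℝ => logit (1 - Phi (a * Real.sqrt n + b)) / n)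
      Filter.atTop (nhds (-a ^ 2 / 2)) := by
  have hx : Tendsto (fun n => a * √n + b) atTop atTop :=
    tendsto_atTop_add_const_right _ b (tendsto_sqrt_atTop.const_mul_atTop ha)
  have hlogPhi : Tendsto (fun n => log (Phi (a * √n + b)) / n) atTop (𝓝 0) := by
    have h := (continuousAt_log one_ne_zero).tendsto.comp (tendsto_Phi_atTop.comp hx)
    rw [log_one] at h
    exact h.div_atTop tendsto_id
  have hlim := ((tendsto_log_one_sub_Phi_div_sq.comp hx).mul
    (tendsto_mul_sqrt_add_sq_div_self a b)).sub hlogPhi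
  rw [show -1 / 2 * a ^ 2 - 0 = -a ^ 2 / 2 by ring] at hlim
  refine hlim.congr' ?_
  filter_upwards [hx.eventually_gt_atTop 0] with n hn
  simp only [Function.comp, logit, sub_sub_cancel]
  field_simp
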